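/- arXiv:2006.15431 — 3 statements merged into one kernel-verified Lean document; each statement's English description precedes it below -/
import Mathlib

section
/- The Skorokhod map does not increase the modulus of continuity: for every continuous function h on [0,T] and every δ ∈ [0,T], we have ω_δ(Γh) ≤ ω_δ(h), where ω_δ(ψ) = sup{|ψ(t) - ψ(s)| : t,s ∈ [0,T], |t-s| ≤ δ}. -/
/-!
Write `Γh = h - m`, where `m t = inf_{[0,t]} (h ∧ 0)` is the running minimum; `m` is nonincreasing,
so for `s ≤ t` we get `h t - h s ≤ Γh t - Γh s`. For the upper bound, either `m t = m s`, and then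
`Γh t - Γh s = h t - h s`, or the minimum `m t` is attained at some `u ∈ (s, t]` where `h u = m t`,
and then `Γh t - Γh s ≤ h t - h u` because `m s ≤ h s`. Both bounds are increments of `h` over lags
at most `t - s`, hence bounded by `ω_δ(h)`.
-/

open MeasureTheory Real Set

/-- The Skorokhod map: `(Γ f)(t) = f(t) - min_{s ∈ [0,t]} (f(s) ∧ 0)`. -/
noncomputable def skorokhod (f : ℝ → ℝ) (t : ℝ) : ℝ :=
  f t - sInf ((fun s => min (f s) 0) '' Set.Icc 0 t)

/-- The modulus of continuity `ω_δ(ψ) = sup {|ψ(t) - ψ(s)| : t,s ∈ [0,T], |t - s| ≤ δ}`. -/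
noncomputable def modCont (T : ℝ) (ψ : ℝ → ℝ) (δ : ℝ) : ℝ :=
  sSup {x : ℝ | ∃ t ∈ Set.Icc (0:ℝ) T, ∃ s ∈ Set.Icc (0:ℝ) T, |t - s| ≤ δ ∧ x = |ψ t - ψ s|}

section RunningMin

variable {h : ℝ → ℝ} {r s t : ℝ}

noncomputable def runningMin (h : ℝ → ℝ) (t : ℝ) : ℝ :=
  sInf ((fun s => min (h s) 0) '' Icc 0 t)

theorem skorokhod_eq_sub_runningMin : skorokhod h t = h t - runningMin h t := rfl

theorem isCompact_min_zero_image_Icc (hh : ContinuousOn h (Icc 0 t)) :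
    IsCompact ((fun s => min (h s) 0) '' Icc 0 t) :=
  isCompact_Icc.image_of_continuousOn (hh.inf continuousOn_const)

theorem runningMin_le (hh : ContinuousOn h (Icc 0 t)) (hr : r ∈ Icc 0 t) :
    runningMin h t ≤ min (h r) 0 :=
  csInf_le (isCompact_min_zero_image_Icc hh).bddBelow (mem_image_of_mem _ hr)

theorem runningMin_le_runningMin (hh : ContinuousOn h (Icc 0 t)) (hs : 0 ≤ s) (hst : s ≤ t) :
    runningMin h t ≤ runningMin h s :=
  csInf_le_csInf (isCompact_min_zero_image_Icc hh).bddBelow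
    ((nonempty_Icc.2 hs).image _) (image_mono (Icc_subset_Icc_right hst))

theorem exists_min_eq_runningMin (hh : ContinuousOn h (Icc 0 t)) (ht : 0 ≤ t) :
    ∃ u ∈ Icc 0 t, min (h u) 0 = runningMin h t :=
  (isCompact_min_zero_image_Icc hh).sInf_mem ((nonempty_Icc.2 ht).image _)

theorem sub_le_skorokhod_sub (hh : ContinuousOn h (Icc 0 t)) (hs : 0 ≤ s) (hst : s ≤ t) :
    h t - h s ≤ skorokhod h t - skorokhod h s := by
  rw [skorokhod_eq_sub_runningMin, skorokhod_eq_sub_runningMin]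
  linarith [runningMin_le_runningMin hh hs hst]

theorem exists_skorokhod_sub_le (hh : ContinuousOn h (Icc 0 t)) (hs : 0 ≤ s) (hst : s ≤ t) :
    ∃ u ∈ Icc s t, skorokhod h t - skorokhod h s ≤ h t - h u := by
  rw [skorokhod_eq_sub_runningMin, skorokhod_eq_sub_runningMin]
  have hhs : ContinuousOn h (Icc 0 s) := hh.mono (Icc_subset_Icc_right hst)
  have hms : runningMin h s ≤ min (h s) 0 := runningMin_le hhs ⟨hs, le_rfl⟩
  rcases le_or_gt (runningMin h s) (runningMin h t) with hle | hlt
  · exact ⟨s, ⟨le_rfl, hst⟩, by linarith [min_le_left (h s) 0]⟩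
  obtain ⟨u, hu, hmu⟩ := exists_min_eq_runningMin hh (hs.trans hst)
  have hsu : s < u := by
    by_contra! hus
    linarith [runningMin_le hhs ⟨hu.1, hus⟩]
  have hhu : h u = runningMin h t := by
    have hu_neg : h u < 0 := by
      by_contra! hu_nonneg
      rw [min_eq_right hu_nonneg] at hmu
      linarith [min_le_right (h s) 0]
    rwa [min_eq_left hu_neg.le] at hmu
  exact ⟨u, ⟨hsu.le, hu.2⟩, by linarith [min_le_left (h s) 0]⟩

end RunningMin

section ModulusOfContinuity

variable {ψ : ℝ → ℝ} {T δ s t : ℝ}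

theorem modCont_nonneg : 0 ≤ modCont T ψ δ :=
  Real.sSup_nonneg (by rintro _ ⟨_, _, _, _, _, rfl⟩; exact abs_nonneg _)

theorem abs_sub_le_modCont (hψ : ContinuousOn ψ (Icc 0 T)) (ht : t ∈ Icc 0 T)
    (hs : s ∈ Icc 0 T) (hts : |t - s| ≤ δ) : |ψ t - ψ s| ≤ modCont T ψ δ := by
  have hbdd : BddAbove ((fun p : ℝ × ℝ => |ψ p.1 - ψ p.2|) '' (Icc 0 T ×ˢ Icc 0 T)) :=
    ((isCompact_Icc.prod isCompact_Icc).image_of_continuousOn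
      ((hψ.comp continuousOn_fst fun _ hp => hp.1).sub
        (hψ.comp continuousOn_snd fun _ hp => hp.2)).abs).bddAbove
  refine le_csSup (hbdd.mono ?_) ⟨t, ht, s, hs, hts, rfl⟩
  rintro _ ⟨t', ht', s', hs', -, rfl⟩
  exact ⟨(t', s'), ⟨ht', hs'⟩, rfl⟩

end ModulusOfContinuity

theorem abs_skorokhod_sub_le_modCont {h : ℝ → ℝ} {T δ s t : ℝ}
    (hh : ContinuousOn h (Icc 0 T)) (hs : s ∈ Icc 0 T) (ht : t ∈ Icc 0 T) (hst : s ≤ t)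
    (hts : |t - s| ≤ δ) : |skorokhod h t - skorokhod h s| ≤ modCont T h δ := by
  have hht : ContinuousOn h (Icc 0 t) := hh.mono (Icc_subset_Icc_right ht.2)
  obtain ⟨u, hu, hle⟩ := exists_skorokhod_sub_le hht hs.1 hst
  have htu : |t - u| ≤ δ := by
    rw [abs_of_nonneg (sub_nonneg.2 hu.2)]
    rw [abs_of_nonneg (sub_nonneg.2 hst)] at hts
    linarith [hu.1]
  calc |skorokhod h t - skorokhod h s|
      ≤ max |h t - h s| |h t - h u| := abs_le_max_abs_abs (sub_le_skorokhod_sub hht hs.1 hst) hle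
    _ ≤ modCont T h δ := max_le (abs_sub_le_modCont hh ht hs hts)
        (abs_sub_le_modCont hh ht ⟨hs.1.trans hu.1, hu.2.trans ht.2⟩ htu)

theorem skorokhod_modCont_le_general (T : ℝ) (h : ℝ → ℝ)
    (hh : ContinuousOn h (Set.Icc 0 T)) (δ : ℝ) :
    modCont T (skorokhod h) δ ≤ modCont T h δ := by
  refine Real.sSup_le ?_ modCont_nonneg
  rintro _ ⟨t, ht, s, hs, hts, rfl⟩
  rcases le_total s t with hst | hts'
  · exact abs_skorokhod_sub_le_modCont hh hs ht hst hts
  · rw [abs_sub_comm]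
    exact abs_skorokhod_sub_le_modCont hh ht hs hts' (by rwa [abs_sub_comm])

theorem skorokhod_modCont_le (T : ℝ) (hT : 0 < T) (h : ℝ → ℝ)
    (hh : ContinuousOn h (Set.Icc 0 T)) (δ : ℝ) (hδ : δ ∈ Set.Icc 0 T) :
    modCont T (skorokhod h) δ ≤ modCont T h δ :=
  skorokhod_modCont_le_general T h hh δ
end

section
/- Let a ≥ 0, ξ > 0, and let f be an absolutely continuous function on [0,T] with f(0) = 0 and square-integrable derivative. Define φ_f(t) = a t + ξ f(t). Then (Γφ_f)(t) = 0 for all t ∈ [0,T] if and only if f'(t) ≤ -a/ξ almost everywhere on [0,T] with respect to Lebesgue measure. -/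
open MeasureTheory Real Set

/-!
`Γφ` vanishes on `[0,T]` exactly when `φ` equals its own running minimum, i.e. when `φ` is
nonincreasing there (given `φ 0 = 0`, and continuity so that the running minimum is finite).
For `φ_f(t) = ∫₀ᵗ (a + ξ f')`, monotonicity of the primitive is equivalent, by the Lebesgue
differentiation theorem, to `a + ξ f' ≤ 0` almost everywhere.
-/

section Skorokhod

variable {g : ℝ → ℝ} {T t : ℝ}

theorem skorokhod_eq_zero_of_antitoneOn (h0 : g 0 ≤ 0) (ht : 0 ≤ t)
    (hg : AntitoneOn g (Icc 0 t)) : skorokhod g t = 0 := by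
  have hgt : g t ≤ 0 := (hg ⟨le_rfl, ht⟩ ⟨ht, le_rfl⟩ ht).trans h0
  have hleast : IsLeast ((fun s => min (g s) 0) '' Icc 0 t) (g t) := by
    refine ⟨⟨t, ⟨ht, le_rfl⟩, min_eq_left hgt⟩, ?_⟩
    rintro _ ⟨s, hs, rfl⟩
    exact le_min (hg hs ⟨ht, le_rfl⟩ hs.2) hgt
  rw [skorokhod, hleast.csInf_eq, sub_self]

theorem antitoneOn_of_skorokhod_eq_zero (hg : ContinuousOn g (Icc 0 T))
    (h : ∀ t ∈ Icc 0 T, skorokhod g t = 0) : AntitoneOn g (Icc 0 T) := by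
  intro s hs t ht hst
  have hbdd : BddBelow ((fun u => min (g u) 0) '' Icc 0 t) :=
    (isCompact_Icc.image_of_continuousOn
      ((hg.mono (Icc_subset_Icc_right ht.2)).inf continuousOn_const)).bddBelow
  have hgt : g t = sInf ((fun u => min (g u) 0) '' Icc 0 t) :=
    sub_eq_zero.mp (h t ht)
  calc g t ≤ min (g s) 0 := hgt ▸ csInf_le hbdd ⟨s, ⟨hs.1, hst⟩, rfl⟩
    _ ≤ g s := min_le_left _ _

theorem skorokhod_eq_zero_iff_antitoneOn (h0 : g 0 ≤ 0) (hg : ContinuousOn g (Icc 0 T)) :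
    (∀ t ∈ Icc 0 T, skorokhod g t = 0) ↔ AntitoneOn g (Icc 0 T) :=
  ⟨antitoneOn_of_skorokhod_eq_zero hg, fun hanti _ ht =>
    skorokhod_eq_zero_of_antitoneOn h0 ht.1 (hanti.mono (Icc_subset_Icc_right ht.2))⟩

end Skorokhod

section Primitive

variable {g : ℝ → ℝ} {a b s t : ℝ}

theorem MeasureTheory.IntegrableOn.intervalIntegrable_of_mem_Icc (hg : IntegrableOn g (Icc a b))
    (hs : s ∈ Icc a b) (ht : t ∈ Icc a b) : IntervalIntegrable g volume s t :=
  (hg.mono_set (uIcc_subset_Icc hs ht)).intervalIntegrable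

theorem ae_nonpos_of_antitoneOn_primitive (hg : IntervalIntegrable g volume a b)
    (hF : AntitoneOn (fun t => ∫ s in a..t, g s) (Icc a b)) :
    ∀ᵐ t ∂volume.restrict (Icc a b), g t ≤ 0 := by
  rw [← Measure.restrict_congr_set Ioo_ae_eq_Icc, ae_restrict_iff' measurableSet_Ioo]
  filter_upwards [hg.ae_hasDerivAt_integral] with x hderiv hx
  have hd := hderiv (Icc_subset_uIcc (Ioo_subset_Icc_self hx)) a left_mem_uIcc
  have hacc : AccPt x (Filter.principal (Icc a b)) := by
    simpa using (PerfectSpace.univ_preperfect x (mem_univ x)).nhds_inter (Icc_mem_nhds hx.1 hx.2)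
  exact hd.hasDerivWithinAt.nonpos_of_antitoneOn hacc hF

theorem antitoneOn_primitive_of_ae_nonpos (hg : IntegrableOn g (Icc a b))
    (h : ∀ᵐ t ∂volume.restrict (Icc a b), g t ≤ 0) :
    AntitoneOn (fun t => ∫ s in a..t, g s) (Icc a b) := by
  intro s hs t ht hst
  have hsplit := intervalIntegral.integral_add_adjacent_intervals
    (hg.intervalIntegrable_of_mem_Icc (left_mem_Icc.2 (hs.1.trans hs.2)) hs)
    (hg.intervalIntegrable_of_mem_Icc hs ht)
  have hnonpos : ∫ u in s..t, g u ≤ 0 := by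
    rw [intervalIntegral.integral_of_le hst]
    exact integral_nonpos_of_ae <| ae_restrict_of_ae_restrict_of_subset
      (Ioc_subset_Icc_self.trans (Icc_subset_Icc hs.1 ht.2)) h
  simp only at hsplit ⊢
  linarith

theorem antitoneOn_primitive_iff (hab : a ≤ b) (hg : IntegrableOn g (Icc a b)) :
    AntitoneOn (fun t => ∫ s in a..t, g s) (Icc a b) ↔
      ∀ᵐ t ∂volume.restrict (Icc a b), g t ≤ 0 :=
  ⟨ae_nonpos_of_antitoneOn_primitive
    (hg.intervalIntegrable_of_mem_Icc (left_mem_Icc.2 hab) (right_mem_Icc.2 hab)),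
    antitoneOn_primitive_of_ae_nonpos hg⟩

end Primitive

theorem skorokhod_drift_eq_zero_iff_deriv_le_general (T a ξ : ℝ) (hT : 0 < T)
    (hξ : 0 < ξ) (f f' : ℝ → ℝ) (hf0 : f 0 = 0)
    (hfint : ∀ t ∈ Set.Icc 0 T, f t = ∫ s in (0:ℝ)..t, f' s)
    (hL2 : MemLp f' 2 (volume.restrict (Set.Icc (0:ℝ) T))) :
    (∀ t ∈ Set.Icc 0 T, skorokhod (fun u => a * u + ξ * f u) t = 0) ↔
      ∀ᵐ t ∂(volume.restrict (Set.Icc (0:ℝ) T)), f' t ≤ -a / ξ := by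
  have hf' : IntegrableOn f' (Icc 0 T) := hL2.integrable one_le_two
  have hdrift : IntegrableOn (fun s => a + ξ * f' s) (Icc 0 T) :=
    (integrable_const a).add (hf'.const_mul ξ)
  have hprim : EqOn (fun u => a * u + ξ * f u) (fun t => ∫ s in (0:ℝ)..t, a + ξ * f' s)
      (Icc 0 T) := fun t ht => by
    have hf't := hf'.intervalIntegrable_of_mem_Icc (left_mem_Icc.2 (ht.1.trans ht.2)) ht
    simp only
    rw [intervalIntegral.integral_add intervalIntegrable_const (hf't.const_mul ξ),
      intervalIntegral.integral_const, intervalIntegral.integral_const_mul, ← hfint t ht]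
    simp [mul_comm]
  have hcont : ContinuousOn (fun u => a * u + ξ * f u) (Icc 0 T) := by
    rw [← uIcc_of_le hT.le] at hdrift ⊢
    exact (intervalIntegral.continuousOn_primitive_interval hdrift).congr
      (uIcc_of_le hT.le ▸ hprim)
  rw [skorokhod_eq_zero_iff_antitoneOn (by simp [hf0]) hcont, hprim.congr_antitoneOn,
    antitoneOn_primitive_iff hT.le hdrift]
  refine Filter.eventually_congr (Filter.Eventually.of_forall fun t => ?_)
  rw [le_div_iff₀ hξ]
  constructor <;> intro h <;> linarith

theorem skorokhod_drift_eq_zero_iff_deriv_le (T a ξ : ℝ) (hT : 0 < T) (ha : 0 ≤ a)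
    (hξ : 0 < ξ) (f f' : ℝ → ℝ) (hf0 : f 0 = 0)
    (hfint : ∀ t ∈ Set.Icc 0 T, f t = ∫ s in (0:ℝ)..t, f' s)
    (hL2 : MemLp f' 2 (volume.restrict (Set.Icc (0:ℝ) T))) :
    (∀ t ∈ Set.Icc 0 T, skorokhod (fun u => a * u + ξ * f u) t = 0) ↔
      ∀ᵐ t ∂(volume.restrict (Set.Icc (0:ℝ) T)), f' t ≤ -a / ξ :=
  skorokhod_drift_eq_zero_iff_deriv_le_general T a ξ hT hξ f f' hf0 hfint hL2
end

section
/- Let q, m ≥ 0, ξ > 0, y₀ ≥ 0, ε ∈ (0,1], and suppose U^(ε) is a continuous process satisfying U^(ε)_t = y₀ + q ∫₀ᵗ (m - (ΓU^(ε))(s)) ds + √ε ξ B_t for t ∈ [0,T], where B is a standard Brownian motion. Let Y^(ε)_t = (ΓU^(ε))(t). Then almost surely, for all t ∈ [0,T], max_{0≤s≤t} Y^(ε)_s ≤ 2 e^{2qt} y₀ + m(e^{2qt} - 1) + 2√ε ξ e^{2qt} B*_t, where B*_t = max_{0≤s≤t} |B_s|. -/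
/-!
Pathwise the statement is a deterministic Grönwall argument. For a path `f` of `U` let
`Z s = max_{[0,s]} |f|`. Since `0 ≤ Γ f ≤ 2 Z`, the equation gives
`Z s ≤ A + q ∫₀ˢ (m + 2 Z)` with `A = y₀ + √ε ξ B*_t`, i.e.
`Z + m/2 ≤ (A + m/2) + 2q ∫₀ˢ (Z + m/2)`. Grönwall's inequality, which needs no continuity
of the monotone function `Z`, yields `Z t + m/2 ≤ (A + m/2) e^{2qt}`, and the claim follows from
`Γ f s ≤ 2 Z s ≤ 2 Z t`.
-/

open MeasureTheory ProbabilityTheory Real Set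

/-- A standard one-dimensional Brownian motion started at `0`. -/
structure IsBrownianMotion {Ω : Type*} [MeasureSpace Ω] (B : ℝ → Ω → ℝ) : Prop where
  measurable : ∀ t, Measurable (B t)
  start : ∀ᵐ ω ∂(ℙ : MeasureTheory.Measure Ω), B 0 ω = 0
  cont : ∀ᵐ ω ∂(ℙ : MeasureTheory.Measure Ω), Continuous fun t => B t ω
  gauss_incr : ∀ s t : ℝ, 0 ≤ s → s ≤ t →
    MeasureTheory.Measure.map (fun ω => B t ω - B s ω) (ℙ : MeasureTheory.Measure Ω) =
      ProbabilityTheory.gaussianReal 0 (Real.toNNReal (t - s))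
  indep_incr : ∀ s t u v : ℝ, 0 ≤ s → s ≤ t → t ≤ u → u ≤ v →
    ProbabilityTheory.IndepFun (fun ω => B t ω - B s ω) (fun ω => B v ω - B u ω)
      (ℙ : MeasureTheory.Measure Ω)

/-- The running maximum of `|B|` over `[0,T]`: `B*_T(ω) = max_{0 ≤ t ≤ T} |B_t(ω)|`. -/
noncomputable def BStar {Ω : Type*} (B : ℝ → Ω → ℝ) (T : ℝ) (ω : Ω) : ℝ :=
  sSup ((fun t => |B t ω|) '' Set.Icc 0 T)

open Filter Topology

section RunningMax

variable {f : ℝ → ℝ} {s t M : ℝ}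

noncomputable def runningMaxAbs (f : ℝ → ℝ) (s : ℝ) : ℝ :=
  sSup ((fun p => |f p|) '' Icc 0 s)

lemma abs_le_runningMaxAbs (hf : ContinuousOn f (Icc 0 t)) (hst : s ≤ t) {p : ℝ}
    (hp : p ∈ Icc 0 s) : |f p| ≤ runningMaxAbs f s :=
  le_csSup (((isCompact_Icc.image_of_continuousOn hf.abs).bddAbove).mono
    (image_mono (Icc_subset_Icc_right hst))) (mem_image_of_mem _ hp)

lemma runningMaxAbs_le (hs : 0 ≤ s) (h : ∀ p ∈ Icc 0 s, |f p| ≤ M) : runningMaxAbs f s ≤ M :=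
  csSup_le ((nonempty_Icc.2 hs).image _) (forall_mem_image.2 h)

lemma monotoneOn_runningMaxAbs (hf : ContinuousOn f (Icc 0 t)) :
    MonotoneOn (runningMaxAbs f) (Icc 0 t) := fun _ ha _ hb hab =>
  runningMaxAbs_le ha.1 fun _ hp => abs_le_runningMaxAbs hf hb.2 ⟨hp.1, hp.2.trans hab⟩

end RunningMax

lemma skorokhod_mem_Icc {f : ℝ → ℝ} {s M : ℝ} (hs : 0 ≤ s) (hM : ∀ p ∈ Icc 0 s, |f p| ≤ M) :
    skorokhod f s ∈ Icc 0 (2 * M) := by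
  have hs' : s ∈ Icc 0 s := ⟨hs, le_rfl⟩
  have hlow : -M ∈ lowerBounds ((fun p => min (f p) 0) '' Icc 0 s) := by
    rintro _ ⟨p, hp, rfl⟩
    have := abs_le.1 (hM p hp)
    exact le_min (by linarith) (by linarith)
  have hinf_le : sInf ((fun p => min (f p) 0) '' Icc 0 s) ≤ min (f s) 0 :=
    csInf_le ⟨-M, hlow⟩ ⟨s, hs', rfl⟩
  have hle_inf : -M ≤ sInf ((fun p => min (f p) 0) '' Icc 0 s) :=
    le_csInf ⟨_, s, hs', rfl⟩ hlow
  have := abs_le.1 (hM s hs')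
  unfold skorokhod
  constructor <;> linarith [min_le_left (f s) 0]

theorem MonotoneOn.integral_le_sub_mul {g : ℝ → ℝ} {x z : ℝ} (hg : MonotoneOn g (Icc x z))
    (hxz : x ≤ z) : ∫ r in x..z, g r ≤ (z - x) * g z :=
  calc ∫ r in x..z, g r ≤ ∫ _ in x..z, g z :=
        intervalIntegral.integral_mono_on hxz (uIcc_of_le hxz ▸ hg).intervalIntegrable
          intervalIntegrable_const fun _ hr => hg hr ⟨hxz, le_rfl⟩ hr.2
    _ = (z - x) * g z := by simp

theorem MonotoneOn.le_mul_exp_of_le_add_mul_integral {g : ℝ → ℝ} {a b C K : ℝ}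
    (hg : MonotoneOn g (Icc a b)) (hK : 0 ≤ K)
    (h : ∀ s ∈ Icc a b, g s ≤ C + K * ∫ r in a..s, g r) :
    ∀ s ∈ Icc a b, g s ≤ C * exp (K * (s - a)) := by
  intro s hs
  have hab : a ≤ b := hs.1.trans hs.2
  set F : ℝ → ℝ := fun s => C + K * ∫ r in a..s, g r with hF
  have hint : IntervalIntegrable g volume a b := (uIcc_of_le hab ▸ hg).intervalIntegrable
  have hint' : ∀ x ∈ Icc a b, ∀ y ∈ Icc a b, IntervalIntegrable g volume x y :=
    fun x hx y hy => hint.mono_set (uIcc_of_le hab ▸ uIcc_subset_Icc hx hy)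
  have hFcont : ContinuousOn F (Icc a b) := by
    have := intervalIntegral.continuousOn_primitive_interval' hint left_mem_uIcc
    rw [uIcc_of_le hab] at this
    exact continuousOn_const.add (continuousOn_const.mul this)
  -- On `[x, z]` the monotone `g` is at most `g z ≤ F z`, so the difference quotients of
  -- `F` are at most `K * F z`.
  have hslope : ∀ x ∈ Icc a b, ∀ z ∈ Ioc x b, (z - x)⁻¹ * (F z - F x) ≤ K * F z := by
    intro x hx z hz
    have hzab : z ∈ Icc a b := ⟨hx.1.trans hz.1.le, hz.2⟩
    have hdiff : F z - F x = K * ∫ r in x..z, g r := by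
      simp only [hF]
      rw [← intervalIntegral.integral_interval_sub_left (hint' a ⟨le_rfl, hab⟩ z hzab)
        (hint' a ⟨le_rfl, hab⟩ x hx)]
      ring
    have hmono := (hg.mono (Icc_subset_Icc hx.1 hz.2)).integral_le_sub_mul hz.1.le
    have hpos : 0 < z - x := sub_pos.2 hz.1
    calc (z - x)⁻¹ * (F z - F x) ≤ (z - x)⁻¹ * (K * ((z - x) * g z)) := by
          rw [hdiff]; gcongr
      _ = K * g z := by field_simp
      _ ≤ K * F z := by gcongr; exact h z hzab
  have hderiv : ∀ x ∈ Ico a b, ∀ r, K * F x < r →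
      ∃ᶠ z in 𝓝[>] x, (z - x)⁻¹ * (F z - F x) < r := by
    intro x hx r hr
    have hlim : Tendsto F (𝓝[>] x) (𝓝 (F x)) := by
      rw [← nhdsWithin_Ioc_eq_nhdsGT hx.2]
      exact ((hFcont x (Ico_subset_Icc_self hx)).mono
        (Ioc_subset_Icc_self.trans (Icc_subset_Icc_left hx.1))).tendsto
    refine Eventually.frequently ?_
    filter_upwards [Ioc_mem_nhdsGT hx.2, (hlim.const_mul K).eventually (gt_mem_nhds hr)]
      with z hz hzr
    exact (hslope x (Ico_subset_Icc_self hx) z hz).trans_lt hzr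
  have hFa : F a ≤ C := by simp [hF]
  calc g s ≤ F s := h s hs
    _ ≤ gronwallBound C K 0 (s - a) :=
      le_gronwallBound_of_liminf_deriv_right_le hFcont hderiv hFa (fun x _ => by simp) s hs
    _ = C * exp (K * (s - a)) := gronwallBound_ε0 C K (s - a)

section Reflection

variable {f : ℝ → ℝ} {t q m A : ℝ}

lemma runningMaxAbs_le_add_integral (hq : 0 ≤ q) (hm : 0 ≤ m) (hf : ContinuousOn f (Icc 0 t))
    (hA : ∀ s ∈ Icc 0 t, |f s - q * ∫ r in (0:ℝ)..s, (m - skorokhod f r)| ≤ A) :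
    ∀ s ∈ Icc 0 t, runningMaxAbs f s ≤ A + q * ∫ r in (0:ℝ)..s, (m + 2 * runningMaxAbs f r) := by
  intro s hs
  have hZ_nonneg : ∀ r ∈ Icc 0 t, 0 ≤ runningMaxAbs f r := fun r hr =>
    (abs_nonneg _).trans (abs_le_runningMaxAbs hf hr.2 ⟨le_rfl, hr.1⟩)
  have hint : IntervalIntegrable (fun r => m + 2 * runningMaxAbs f r) volume 0 s :=
    intervalIntegrable_const.add (((monotoneOn_runningMaxAbs hf).mono
      (uIcc_of_le hs.1 ▸ Icc_subset_Icc_right hs.2)).intervalIntegrable.const_mul 2)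
  refine runningMaxAbs_le hs.1 fun p hp => ?_
  have hps : p ∈ Icc 0 t := ⟨hp.1, hp.2.trans hs.2⟩
  have hintegrand : ∀ r ∈ Ioc 0 p, |m - skorokhod f r| ≤ m + 2 * runningMaxAbs f r := by
    intro r hr
    have hΓ := skorokhod_mem_Icc hr.1.le fun _ hu =>
      abs_le_runningMaxAbs hf (hr.2.trans hps.2) hu
    rw [abs_le]
    constructor <;> linarith [hΓ.1, hΓ.2]
  have hint_le : |∫ r in (0:ℝ)..p, (m - skorokhod f r)| ≤
      ∫ r in (0:ℝ)..p, (m + 2 * runningMaxAbs f r) :=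
    intervalIntegral.norm_integral_le_of_norm_le (f := fun r => m - skorokhod f r) hp.1
      (ae_of_all _ hintegrand)
      (hint.mono_set (uIcc_subset_uIcc_left (by rwa [uIcc_of_le hs.1])))
  have hint_mono : ∫ r in (0:ℝ)..p, (m + 2 * runningMaxAbs f r) ≤
      ∫ r in (0:ℝ)..s, (m + 2 * runningMaxAbs f r) :=
    intervalIntegral.integral_mono_interval le_rfl hp.1 hp.2
      (ae_restrict_of_forall_mem measurableSet_Ioc fun r hr => by
        have := hZ_nonneg r ⟨hr.1.le, hr.2.trans hs.2⟩
        simp only [Pi.zero_apply]; positivity) hint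
  calc |f p| ≤ |f p - q * ∫ r in (0:ℝ)..p, (m - skorokhod f r)|
        + q * |∫ r in (0:ℝ)..p, (m - skorokhod f r)| := by
        have := abs_sub_abs_le_abs_sub (f p) (q * ∫ r in (0:ℝ)..p, (m - skorokhod f r))
        rw [abs_mul, abs_of_nonneg hq] at this
        linarith
    _ ≤ A + q * ∫ r in (0:ℝ)..s, (m + 2 * runningMaxAbs f r) := by
        gcongr
        · exact hA p hps
        · exact hint_le.trans hint_mono

lemma runningMaxAbs_le_exp (hq : 0 ≤ q) (hm : 0 ≤ m) (hf : ContinuousOn f (Icc 0 t))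
    (hA : ∀ s ∈ Icc 0 t, |f s - q * ∫ r in (0:ℝ)..s, (m - skorokhod f r)| ≤ A) :
    ∀ s ∈ Icc 0 t, runningMaxAbs f s ≤ (A + m / 2) * exp (2 * q * s) - m / 2 := by
  have hmono : MonotoneOn (fun r => runningMaxAbs f r + m / 2) (Icc 0 t) :=
    fun a ha b hb hab => by simpa using monotoneOn_runningMaxAbs hf ha hb hab
  have hineq : ∀ s ∈ Icc 0 t, runningMaxAbs f s + m / 2 ≤
      A + m / 2 + 2 * q * ∫ r in (0:ℝ)..s, (runningMaxAbs f r + m / 2) := by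
    intro s hs
    have hrw : ∫ r in (0:ℝ)..s, (m + 2 * runningMaxAbs f r) =
        2 * ∫ r in (0:ℝ)..s, (runningMaxAbs f r + m / 2) := by
      rw [← intervalIntegral.integral_const_mul]
      congr 1 with r
      ring
    linarith [hrw ▸ runningMaxAbs_le_add_integral hq hm hf hA s hs]
  intro s hs
  have hgron := hmono.le_mul_exp_of_le_add_mul_integral (by positivity) hineq s hs
  rw [sub_zero] at hgron
  linarith

end Reflection

theorem reflecting_OU_pathwise_bound_general {Ω : Type*} [MeasureSpace Ω]
    (B : ℝ → Ω → ℝ) (hB : IsBrownianMotion B)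
    (T q m ξ y₀ ε : ℝ) (hq : 0 ≤ q) (hm : 0 ≤ m) (hξ : 0 < ξ)
    (hy₀ : 0 ≤ y₀) (U : ℝ → Ω → ℝ)
    (hU : ∀ᵐ ω ∂(ℙ : Measure Ω), ContinuousOn (fun t => U t ω) (Set.Icc 0 T) ∧
      ∀ t ∈ Set.Icc 0 T, U t ω =
        y₀ + q * (∫ s in (0:ℝ)..t, (m - skorokhod (fun r => U r ω) s)) +
          Real.sqrt ε * ξ * B t ω) :
    ∀ᵐ ω ∂(ℙ : Measure Ω), ∀ t ∈ Set.Icc 0 T,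
      sSup ((fun s => skorokhod (fun r => U r ω) s) '' Set.Icc 0 t) ≤
        2 * Real.exp (2 * q * t) * y₀ + m * (Real.exp (2 * q * t) - 1) +
          2 * Real.sqrt ε * ξ * Real.exp (2 * q * t) * BStar B t ω := by
  filter_upwards [hU, hB.cont] with ω ⟨hUc, hUeq⟩ hBc
  intro t ht
  have hc : 0 ≤ √ε * ξ := by positivity
  have hUc' : ContinuousOn (fun r => U r ω) (Icc 0 t) := hUc.mono (Icc_subset_Icc_right ht.2)
  have hdrive : ∀ s ∈ Icc 0 t, |U s ω - q * ∫ r in (0:ℝ)..s,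
      (m - skorokhod (fun r => U r ω) r)| ≤ y₀ + √ε * ξ * BStar B t ω := by
    intro s hs
    rw [hUeq s ⟨hs.1, hs.2.trans ht.2⟩, add_sub_right_comm, add_sub_cancel_right]
    calc |y₀ + √ε * ξ * B s ω| ≤ y₀ + √ε * ξ * |B s ω| := by
          simpa [abs_mul, abs_of_nonneg hy₀, abs_of_nonneg hc] using abs_add_le y₀ (√ε * ξ * B s ω)
      _ ≤ y₀ + √ε * ξ * BStar B t ω := by
          -- `BStar B t ω` unfolds to `runningMaxAbs (fun r => B r ω) t`.
          gcongr; exact abs_le_runningMaxAbs hBc.continuousOn le_rfl hs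
  have hZ := runningMaxAbs_le_exp hq hm hUc' hdrive t ⟨ht.1, le_rfl⟩
  refine csSup_le ((nonempty_Icc.2 ht.1).image _) (forall_mem_image.2 fun s hs => ?_)
  calc skorokhod (fun r => U r ω) s ≤ 2 * runningMaxAbs (fun r => U r ω) s :=
        (skorokhod_mem_Icc hs.1 fun _ hp => abs_le_runningMaxAbs hUc' hs.2 hp).2
    _ ≤ 2 * runningMaxAbs (fun r => U r ω) t := by
        gcongr; exact monotoneOn_runningMaxAbs hUc' hs ⟨ht.1, le_rfl⟩ hs.2
    _ ≤ _ := by linarith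

theorem reflecting_OU_pathwise_bound {Ω : Type*} [MeasureSpace Ω]
    [IsProbabilityMeasure (ℙ : Measure Ω)] (B : ℝ → Ω → ℝ) (hB : IsBrownianMotion B)
    (T q m ξ y₀ ε : ℝ) (hT : 0 < T) (hq : 0 ≤ q) (hm : 0 ≤ m) (hξ : 0 < ξ)
    (hy₀ : 0 ≤ y₀) (hε : ε ∈ Set.Ioc (0:ℝ) 1) (U : ℝ → Ω → ℝ)
    (hU : ∀ᵐ ω ∂(ℙ : Measure Ω), ContinuousOn (fun t => U t ω) (Set.Icc 0 T) ∧
      ∀ t ∈ Set.Icc 0 T, U t ω =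
        y₀ + q * (∫ s in (0:ℝ)..t, (m - skorokhod (fun r => U r ω) s)) +
          Real.sqrt ε * ξ * B t ω) :
    ∀ᵐ ω ∂(ℙ : Measure Ω), ∀ t ∈ Set.Icc 0 T,
      sSup ((fun s => skorokhod (fun r => U r ω) s) '' Set.Icc 0 t) ≤
        2 * Real.exp (2 * q * t) * y₀ + m * (Real.exp (2 * q * t) - 1) +
          2 * Real.sqrt ε * ξ * Real.exp (2 * q * t) * BStar B t ω :=
  reflecting_OU_pathwise_bound_general B hB T q m ξ y₀ ε hq hm hξ hy₀ U hU
end
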